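/- Let v ∈ ℤ³ be primitive with d² ∣ ‖v‖², and let a ∈ ℤ³ satisfy d ∣ a × v and d² ∣ (a × v) × v. Then d² divides the dot product a · v. -/

import Mathlib

def dot3 (a b : Fin 3 → ℤ) : ℤ := a 0 * b 0 + a 1 * b 1 + a 2 * b 2

def cross3 (a b : Fin 3 → ℤ) : Fin 3 → ℤ :=
  ![a 1 * b 2 - a 2 * b 1, a 2 * b 0 - a 0 * b 2, a 0 * b 1 - a 1 * b 0]

def Primitive (v : Fin 3 → ℤ) : Prop := Int.gcd (Int.gcd (v 0) (v 1)) (v 2) = 1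

/-! By the vector triple product identity `(a × v) × v = (a · v) v - (v · v) a`, the hypotheses
give `d² ∣ (a · v) vᵢ` for every coordinate `i`; since the coordinates of `v` have gcd `1`,
Bézout turns this into `d² ∣ a · v`. -/

theorem cross3_cross3_right_apply (a v : Fin 3 → ℤ) (i : Fin 3) :
    cross3 (cross3 a v) v i = dot3 a v * v i - dot3 v v * a i := by
  fin_cases i <;> simp [cross3, dot3] <;> ring

theorem Int.dvd_mul_gcd_of_dvd_mul {n t x y : ℤ} (hx : n ∣ t * x) (hy : n ∣ t * y) :
    n ∣ t * x.gcd y := by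
  rw [Int.gcd_eq_gcd_ab, mul_add, ← mul_assoc, ← mul_assoc]
  exact dvd_add (hx.mul_right _) (hy.mul_right _)

theorem Primitive.dvd_of_forall_dvd_mul {v : Fin 3 → ℤ} (hv : Primitive v) {n t : ℤ}
    (h : ∀ i, n ∣ t * v i) : n ∣ t := by
  have h' := Int.dvd_mul_gcd_of_dvd_mul (Int.dvd_mul_gcd_of_dvd_mul (h 0) (h 1)) (h 2)
  rwa [hv, Nat.cast_one, mul_one] at h'

theorem dot_div_sq (v a : Fin 3 → ℤ) (hv : Primitive v) (d : ℤ)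
    (hdvd : d^2 ∣ dot3 v v)
    (h2 : ∀ i, d^2 ∣ cross3 (cross3 a v) v i) :
    d^2 ∣ dot3 a v := by
  refine hv.dvd_of_forall_dvd_mul fun i => ?_
  have hi : dot3 a v * v i = cross3 (cross3 a v) v i + dot3 v v * a i := by
    rw [cross3_cross3_right_apply]
    ring
  rw [hi]
  exact dvd_add (h2 i) (hdvd.mul_right _)
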